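/- arXiv:2012.05233 — 7 statements merged into one kernel-verified Lean document; each statement's English description precedes it below -/
import Mathlib

section
/- Let A_0 = id and A_{j+1} = A_j ∘ R_ψ ∘ A_j⁻¹ ∘ O ∘ A_j for j ≥ 0. Then for every k ≥ 0, A_k(ψ) = sin(3^k θ)·g + cos(3^k θ)·b (perfect recursive amplitude amplification triples the angle at each level). -/
/-!
On the real plane spanned by the orthonormal pair `g, b`, write `v φ = sin φ • g + cos φ • b`.
The oracle `O` acts as `v φ ↦ v (-φ)` and the reflection `R_ψ` about `ψ = v θ` as
`v φ ↦ v (2θ - φ)`. By induction `A_j` rotates the circle `v` by `c_j = (3 ^ j - 1) θ`, since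
unfolding the recursion gives `c_{j+1} = 3 c_j + 2θ`; hence `A_k ψ = v (3 ^ k θ)`.
-/

open Real

section Arc

variable {M : Type*} [AddCommGroup M] [Module ℝ M]

noncomputable def arc (g b : M) (φ : ℝ) : M := sin φ • g + cos φ • b

theorem arc_neg_left (g b : M) (φ : ℝ) : arc (-g) b φ = arc g b (-φ) := by
  simp only [arc, sin_neg, cos_neg, smul_neg, neg_smul]

theorem map_arc {N : Type*} [AddCommGroup N] [Module ℝ N] (f : M →ₗ[ℝ] N) (g b : M) (φ : ℝ) :
    f (arc g b φ) = arc (f g) (f b) φ := by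
  simp only [arc, map_add, map_smul]

theorem arc_two_mul_sub (g b : M) (θ φ : ℝ) :
    arc g b (2 * θ - φ) = (2 * cos (θ - φ)) • arc g b θ - arc g b φ := by
  have hsin : sin (2 * θ - φ) = 2 * cos (θ - φ) * sin θ - sin φ := by
    rw [show 2 * θ - φ = θ + (θ - φ) by ring, sin_add, cos_sub, sin_sub]
    linear_combination (-sin φ) * sin_sq_add_cos_sq θ
  have hcos : cos (2 * θ - φ) = 2 * cos (θ - φ) * cos θ - cos φ := by
    rw [show 2 * θ - φ = θ + (θ - φ) by ring, cos_add, cos_sub, sin_sub]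
    linear_combination (-cos φ) * sin_sq_add_cos_sq θ
  simp only [arc, hsin, hcos, smul_add, smul_smul, sub_smul]
  abel

end Arc

section Reflection

variable {E : Type*} [NormedAddCommGroup E] [InnerProductSpace ℂ E] {g b : E}

theorem inner_arc_arc (hg : ‖g‖ = 1) (hb : ‖b‖ = 1) (hgb : inner ℂ g b = 0) (α β : ℝ) :
    inner ℂ (arc g b α) (arc g b β) = (cos (α - β) : ℂ) := by
  have hbg : inner ℂ b g = 0 := inner_eq_zero_symm.mp hgb
  simp only [arc, ← Complex.coe_smul, inner_add_left, inner_add_right, inner_smul_left,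
    inner_smul_right, inner_self_eq_one_of_norm_eq_one hg, inner_self_eq_one_of_norm_eq_one hb,
    hgb, hbg, Complex.conj_ofReal, cos_sub]
  push_cast
  ring

theorem reflection_arc (hg : ‖g‖ = 1) (hb : ‖b‖ = 1) (hgb : inner ℂ g b = 0) {θ : ℝ}
    {R : E → E} (hR : ∀ x, R x = (2 * inner ℂ (arc g b θ) x) • arc g b θ - x) (φ : ℝ) :
    R (arc g b φ) = arc g b (2 * θ - φ) := by
  rw [hR, inner_arc_arc hg hb hgb, arc_two_mul_sub, ← Complex.coe_smul]
  push_cast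
  rfl

end Reflection

theorem recursive_amplification_apply {X : Type*} {v : ℝ → X} {θ : ℝ} {R O : X → X}
    (hR : ∀ φ, R (v φ) = v (2 * θ - φ)) (hO : ∀ φ, O (v φ) = v (-φ))
    {A : ℕ → X ≃ X} (hA0 : ∀ x, A 0 x = x)
    (hAstep : ∀ j x, A (j + 1) x = A j (R ((A j).symm (O (A j x))))) (j : ℕ) (φ : ℝ) :
    A j (v φ) = v (φ + ((3 : ℝ) ^ j - 1) * θ) := by
  induction j generalizing φ with
  | zero => simp [hA0]
  | succ j ih =>
    have ih_symm : ∀ φ, (A j).symm (v φ) = v (φ - ((3 : ℝ) ^ j - 1) * θ) := fun φ => by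
      rw [(A j).symm_apply_eq, ih, sub_add_cancel]
    rw [hAstep, ih, hO, ih_symm, hR, ih]
    congr 1
    ring

/-- Perfect recursive amplitude amplification: with `A_0 = id` and
`A_{j+1} = A_j ∘ R_ψ ∘ A_j⁻¹ ∘ O ∘ A_j`, we have
`A_k ψ = sin(3^k θ) • g + cos(3^k θ) • b` for every `k ≥ 0`. -/
theorem stmt_0 {E : Type*} [NormedAddCommGroup E] [InnerProductSpace ℂ E]
    (g b : E) (hg : ‖g‖ = 1) (hb : ‖b‖ = 1) (hgb : (inner ℂ g b : ℂ) = 0)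
    (θ : ℝ) (ψ : E) (hψ : ψ = Real.sin θ • g + Real.cos θ • b)
    (Rψ : E ≃ₗᵢ[ℂ] E) (hRψ : ∀ x : E, Rψ x = ((2 : ℂ) * inner ℂ ψ x) • ψ - x)
    (O : E ≃ₗᵢ[ℂ] E) (hOg : O g = -g) (hOb : O b = b)
    (A : ℕ → (E ≃ₗᵢ[ℂ] E)) (hA0 : A 0 = LinearIsometryEquiv.refl ℂ E)
    (hAstep : ∀ (j : ℕ) (x : E), A (j + 1) x = A j (Rψ ((A j).symm (O (A j x))))) :
    ∀ k : ℕ,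
      A k ψ = Real.sin ((3 : ℝ) ^ k * θ) • g + Real.cos ((3 : ℝ) ^ k * θ) • b := by
  change ψ = arc g b θ at hψ
  subst hψ
  have hR : ∀ φ, Rψ (arc g b φ) = arc g b (2 * θ - φ) := reflection_arc hg hb hgb hRψ
  have hO : ∀ φ, O (arc g b φ) = arc g b (-φ) := fun φ => by
    have h := map_arc (O.toLinearEquiv.toLinearMap.restrictScalars ℝ) g b φ
    simp only [LinearMap.coe_restrictScalars, LinearEquiv.coe_coe,
      LinearIsometryEquiv.coe_toLinearEquiv, hOg, hOb, arc_neg_left] at h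
    exact h
  intro k
  have h := recursive_amplification_apply (A := fun j => (A j).toEquiv) hR hO
    (by simp [hA0]) hAstep k θ
  rw [show θ + ((3 : ℝ) ^ k - 1) * θ = (3 : ℝ) ^ k * θ by ring] at h
  exact h
end

section
/- Let n ≥ 1 and let P : {−1,1}^n × {−1,1}^n → ℝ satisfy |P(x,y) − IP_n(x,y)| ≤ 1/3 for all x, y ∈ {−1,1}^n. Then the spectral norm of P (as a function of 2n Boolean variables) is at least (2/3)·2^n, i.e., ∑_{S,T ⊆ [n]} |P̂(S,T)| ≥ (2/3)·2^n where P̂(S,T) = 4^{−n} ∑_{x,y} P(x,y)·χ_S(x)·χ_T(y). -/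
/-!
The inner product function is, up to the factor `2^n`, its own Fourier transform:
`∑_{S,T} IP(1_S, 1_T) χ_S(x) χ_T(y) = 2^n IP(x,y)`, because both sides factor over the
coordinates. Pairing the Fourier coefficients of `P` with the signs `IP(1_S, 1_T)` therefore gives
`2^n` times the average of `P·IP`, which is at least `2/3` pointwise. Since the signs have absolute
value one, this pairing is at most the spectral norm.
-/

/-- Encoding of a `{-1,1}`-bit by a Boolean: `true ↦ -1`, `false ↦ 1`. -/
def pm (b : Bool) : ℝ := if b then -1 else 1

open Finset

lemma abs_pm (b : Bool) : |pm b| = 1 := by cases b <;> simp [pm]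

lemma Fintype.sum_finset_prod_decide_mem {ι R : Type*} [Fintype ι] [DecidableEq ι]
    [CommSemiring R] (f : ι → Bool → R) :
    ∑ S : Finset ι, ∏ i, f i (decide (i ∈ S)) = ∏ i, ∑ b, f i b := by
  simp only [sum_bool, Finset.prod_add, powerset_univ]
  refine Finset.sum_congr rfl fun S _ => ?_
  rw [← prod_mul_prod_compl S]
  congr 1 <;> refine Finset.prod_congr rfl fun i hi => ?_ <;> simp_all

section

variable {ι : Type*} [Fintype ι]

def chi (S : Finset ι) (x : ι → Bool) : ℝ := ∏ i ∈ S, pm (x i)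

def ip (x y : ι → Bool) : ℝ := ∏ i, pm (x i && y i)

lemma abs_ip (x y : ι → Bool) : |ip x y| = 1 := by
  simp [ip, abs_prod, abs_pm]

lemma chi_eq_prod_decide_mem [DecidableEq ι] (S : Finset ι) (x : ι → Bool) :
    chi S x = ∏ i, if decide (i ∈ S) then pm (x i) else 1 := by
  simp [chi]

lemma sum_ip_mul_chi_mul_chi [DecidableEq ι] (x y : ι → Bool) :
    ∑ S : Finset ι, ∑ T : Finset ι,
      ip (fun i => decide (i ∈ S)) (fun i => decide (i ∈ T)) * (chi S x * chi T y) =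
      2 ^ Fintype.card ι * ip x y := by
  set F : ι → Bool → Bool → ℝ := fun i s t =>
    pm (s && t) * (if s then pm (x i) else 1) * (if t then pm (y i) else 1)
  have hF : ∀ i, ∑ s, ∑ t, F i s t = 2 * pm (x i && y i) := fun i => by
    simp only [F]
    cases x i <;> cases y i <;> simp [pm] <;> norm_num
  calc _ = ∑ S : Finset ι, ∑ T : Finset ι, ∏ i, F i (decide (i ∈ S)) (decide (i ∈ T)) := by
        simp only [ip, chi_eq_prod_decide_mem, ← prod_mul_distrib, F, mul_assoc]
    _ = ∏ i, ∑ s, ∑ t, F i s t := by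
        simp only [Fintype.sum_finset_prod_decide_mem (fun i => F i _),
          Fintype.sum_finset_prod_decide_mem
          (fun i s => ∑ t, F i s t)]
    _ = 2 ^ Fintype.card ι * ip x y := by
        rw [prod_congr rfl fun i _ => hF i, prod_mul_distrib, prod_const, card_univ, ip]

lemma sum_ip_mul_fourierCoeff [DecidableEq ι] (c : ℝ) (P : (ι → Bool) → (ι → Bool) → ℝ) :
    ∑ S : Finset ι, ∑ T : Finset ι,
      ip (fun i => decide (i ∈ S)) (fun i => decide (i ∈ T)) *
        (c * ∑ x, ∑ y, P x y * chi S x * chi T y) =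
      c * 2 ^ Fintype.card ι * ∑ x, ∑ y, P x y * ip x y := by
  calc _ = ∑ S : Finset ι, ∑ T : Finset ι, ∑ x, ∑ y, c * (P x y *
        (ip (fun i => decide (i ∈ S)) (fun i => decide (i ∈ T)) * (chi S x * chi T y))) := by
        simp only [mul_sum]
        refine sum_congr rfl fun S _ => sum_congr rfl fun T _ =>
          sum_congr rfl fun x _ => sum_congr rfl fun y _ => by ring
    _ = ∑ x, ∑ y, ∑ S : Finset ι, ∑ T : Finset ι, c * (P x y *
        (ip (fun i => decide (i ∈ S)) (fun i => decide (i ∈ T)) * (chi S x * chi T y))) := by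
        simp only [sum_comm (γ := Finset ι) (α := ι → Bool)]
    _ = c * 2 ^ Fintype.card ι * ∑ x, ∑ y, P x y * ip x y := by
        simp only [← mul_sum, sum_ip_mul_chi_mul_chi, mul_left_comm _ (2 ^ Fintype.card ι : ℝ)]
        ring

end

lemma one_sub_le_mul_of_abs_sub_le {p s ε : ℝ} (hs : |s| = 1) (h : |p - s| ≤ ε) :
    1 - ε ≤ p * s := by
  have hs2 : s * s = 1 := by rw [← abs_mul_abs_self, hs, one_mul]
  have : |(p - s) * s| ≤ ε := by rwa [abs_mul, hs, mul_one]
  nlinarith [neg_abs_le ((p - s) * s)]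

theorem stmt_5_general (n : ℕ) (P : (Fin n → Bool) → (Fin n → Bool) → ℝ)
    (hP : ∀ x y, |P x y - ∏ i, pm (x i && y i)| ≤ 1 / 3) :
    (2 / 3 : ℝ) * 2 ^ n ≤
      ∑ S : Finset (Fin n), ∑ T : Finset (Fin n),
        |(1 / 4 ^ n : ℝ) * ∑ x : Fin n → Bool, ∑ y : Fin n → Bool,
          P x y * (∏ i ∈ S, pm (x i)) * (∏ i ∈ T, pm (y i))| := by
  have hcorr : ∀ x y, 2 / 3 ≤ P x y * ip x y := fun x y => by
    linarith [one_sub_le_mul_of_abs_sub_le (abs_ip x y) (hP x y)]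
  have h4 : (4 : ℝ) ^ n = 2 ^ n * 2 ^ n := by rw [← mul_pow]; norm_num
  calc (2 / 3 : ℝ) * 2 ^ n
        = 1 / 4 ^ n * 2 ^ n * ∑ _x : Fin n → Bool, ∑ _y : Fin n → Bool, (2 / 3 : ℝ) := by
        simp [h4]
        field_simp
    _ ≤ 1 / 4 ^ n * 2 ^ n * ∑ x, ∑ y, P x y * ip x y := by gcongr with x _ y _; exact hcorr x y
    _ = ∑ S : Finset (Fin n), ∑ T : Finset (Fin n),
          ip (fun i => decide (i ∈ S)) (fun i => decide (i ∈ T)) *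
            ((1 / 4 ^ n : ℝ) * ∑ x, ∑ y, P x y * chi S x * chi T y) := by
        rw [sum_ip_mul_fourierCoeff, Fintype.card_fin]
    _ ≤ _ := by
        gcongr with S _ T _
        exact (le_abs_self _).trans_eq (by rw [abs_mul, abs_ip, one_mul]; rfl)

/-- Any real-valued `P` on `{−1,1}^n × {−1,1}^n` that pointwise `1/3`-approximates the
inner product function `IP_n(x,y) = ∏_i pm (x i && y i)` has spectral norm
`∑_{S,T ⊆ [n]} |P̂(S,T)| ≥ (2/3)·2^n`, where
`P̂(S,T) = 4^{−n} ∑_{x,y} P(x,y)·χ_S(x)·χ_T(y)`. -/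
theorem stmt_5 (n : ℕ) (hn : 1 ≤ n) (P : (Fin n → Bool) → (Fin n → Bool) → ℝ)
    (hP : ∀ x y, |P x y - ∏ i, pm (x i && y i)| ≤ 1 / 3) :
    (2 / 3 : ℝ) * 2 ^ n ≤
      ∑ S : Finset (Fin n), ∑ T : Finset (Fin n),
        |(1 / 4 ^ n : ℝ) * ∑ x : Fin n → Bool, ∑ y : Fin n → Bool,
          P x y * (∏ i ∈ S, pm (x i)) * (∏ i ∈ T, pm (y i))| :=
  stmt_5_general n P hP
end

section
/- For every n ≥ 1, every subset S ⊆ [n], and every set T of strings in {−1,1}^n, |∑_{i ∈ S} ∑_{y ∈ T} y_i| ≤ √n · 2^n. Equivalently, the discrepancy of the addressing function ADDR_n(i, y) = y_i under the uniform distribution on [n] × {−1,1}^n is at most 1/√n: for every rectangle S × T, |(1/(n·2^n)) ∑_{i∈S, y∈T} y_i| ≤ 1/√n. -/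
/-!
The characters `y ↦ y_i` of the cube `{-1,1}^n` are orthogonal, so for `f y = ∑_{i∈S} y_i`
we get `∑_y f(y)^2 = 2^n |S| ≤ n 2^n`. Cauchy–Schwarz over the `2^n` points of the cube then
bounds `|∑_{y∈T} f y| ≤ ∑_y |f y|` by `√(2^n · n 2^n) = √n 2^n`.
-/

open Finset

lemma pm_not (b : Bool) : pm (!b) = -pm b := by cases b <;> simp [pm]

lemma pm_mul_self (b : Bool) : pm b * pm b = 1 := by cases b <;> simp [pm]

section Orthogonality

variable {ι : Type*} [Fintype ι] [DecidableEq ι]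

-- Flipping the bit at `i` negates the summand.
lemma sum_pm_mul_pm_of_ne {i j : ι} (hij : i ≠ j) :
    ∑ y : ι → Bool, pm (y i) * pm (y j) = 0 := by
  refine sum_ninvolution (fun y => Function.update y i (!y i)) (fun y => ?_)
    (fun y _ h => ?_) (fun y => mem_univ _) (fun y => ?_)
  · simp [Function.update_of_ne hij.symm, pm_not]
  · simpa using congrFun h i
  · simp

lemma sum_pm_mul_pm (i j : ι) :
    ∑ y : ι → Bool, pm (y i) * pm (y j) = if i = j then 2 ^ Fintype.card ι else 0 := by
  split_ifs with hij
  · simp [hij, pm_mul_self]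
  · exact sum_pm_mul_pm_of_ne hij

lemma sum_sq_sum_pm (S : Finset ι) :
    ∑ y : ι → Bool, (∑ i ∈ S, pm (y i)) ^ 2 = 2 ^ Fintype.card ι * #S := by
  calc ∑ y : ι → Bool, (∑ i ∈ S, pm (y i)) ^ 2
      = ∑ i ∈ S, ∑ j ∈ S, ∑ y : ι → Bool, pm (y i) * pm (y j) := by
        simp_rw [sq, sum_mul_sum]
        rw [sum_comm]
        exact sum_congr rfl fun _ _ => sum_comm
    _ = 2 ^ Fintype.card ι * #S := by
        simp [sum_pm_mul_pm, mul_comm]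

end Orthogonality

lemma abs_sum_sum_pm_le {ι : Type*} [Fintype ι] (S : Finset ι) (T : Finset (ι → Bool)) :
    |∑ i ∈ S, ∑ y ∈ T, pm (y i)| ≤ √(Fintype.card ι) * 2 ^ Fintype.card ι := by
  classical
  set f : (ι → Bool) → ℝ := fun y => ∑ i ∈ S, pm (y i)
  have hT : |∑ y ∈ T, f y| ≤ ∑ y, |f y| :=
    (abs_sum_le_sum_abs _ _).trans <|
      sum_le_sum_of_subset_of_nonneg (subset_univ T) fun _ _ _ => abs_nonneg _
  have hS : (#S : ℝ) ≤ Fintype.card ι := mod_cast card_le_univ S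
  have hsq : (∑ y, |f y|) ^ 2 ≤ (√(Fintype.card ι) * 2 ^ Fintype.card ι) ^ 2 :=
    calc (∑ y, |f y|) ^ 2 ≤ 2 ^ Fintype.card ι * ∑ y, f y ^ 2 := by
          simpa using sq_sum_le_card_mul_sum_sq (s := univ) (f := fun y => |f y|)
      _ = 2 ^ Fintype.card ι * (2 ^ Fintype.card ι * #S) := by rw [sum_sq_sum_pm]
      _ ≤ 2 ^ Fintype.card ι * (2 ^ Fintype.card ι * Fintype.card ι) := by gcongr
      _ = (√(Fintype.card ι) * 2 ^ Fintype.card ι) ^ 2 := by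
          rw [mul_pow, Real.sq_sqrt (Nat.cast_nonneg _)]; ring
  rw [sum_comm]
  exact hT.trans (abs_le_of_sq_le_sq' hsq (by positivity)).2

theorem stmt_6_general (n : ℕ) (S : Finset (Fin n)) (T : Finset (Fin n → Bool)) :
    |∑ i ∈ S, ∑ y ∈ T, pm (y i)| ≤ Real.sqrt n * 2 ^ n ∧
    |(1 / (n * 2 ^ n) : ℝ) * ∑ i ∈ S, ∑ y ∈ T, pm (y i)| ≤ 1 / Real.sqrt n := by
  have h := abs_sum_sum_pm_le S T
  rw [Fintype.card_fin] at h
  refine ⟨h, ?_⟩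
  calc |(1 / (n * 2 ^ n) : ℝ) * ∑ i ∈ S, ∑ y ∈ T, pm (y i)|
      ≤ 1 / (n * 2 ^ n) * (√n * 2 ^ n) := by
        rw [abs_mul, abs_of_nonneg (by positivity)]; gcongr
    _ = 1 / √n := by
        rw [← Real.sqrt_div_self', one_div_mul_eq_div, mul_div_mul_right _ _ (by positivity)]

/-- For every `n ≥ 1`, every `S ⊆ [n]` and every set `T` of strings in `{−1,1}^n`,
`|∑_{i∈S} ∑_{y∈T} y_i| ≤ √n · 2^n`; equivalently, the discrepancy of the addressing
function `ADDR_n(i,y) = y_i` under the uniform distribution on `[n] × {−1,1}^n` is at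
most `1/√n`: for every rectangle `S × T`,
`|(1/(n·2^n)) ∑_{i∈S, y∈T} y_i| ≤ 1/√n`. -/
theorem stmt_6 (n : ℕ) (hn : 1 ≤ n) (S : Finset (Fin n)) (T : Finset (Fin n → Bool)) :
    |∑ i ∈ S, ∑ y ∈ T, pm (y i)| ≤ Real.sqrt n * 2 ^ n ∧
    |(1 / (n * 2 ^ n) : ℝ) * ∑ i ∈ S, ∑ y ∈ T, pm (y i)| ≤ 1 / Real.sqrt n :=
  stmt_6_general n S T
end

section
/- Let V, W be sets, let f : V^n → W be transitive as a function of its n coordinates, and let g : {−1,1}^m → V be transitive as a function of its m Boolean coordinates. Then the block composition F : ({−1,1}^m)^n → W defined by F(X_1,…,X_n) = f(g(X_1),…,g(X_n)) is transitive as a function of its nm Boolean coordinates. -/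
def IsTransitiveFn {ι α β : Type*} (F : (ι → α) → β) : Prop :=
  ∀ i j : ι, ∃ σ : Equiv.Perm ι, σ i = j ∧ ∀ x : ι → α, F (fun a => x (σ a)) = F x

theorem IsTransitiveFn.blockComp {ι κ α V W : Type*} {f : (ι → V) → W} {g : (κ → α) → V}
    (hf : IsTransitiveFn f) (hg : IsTransitiveFn g) :
    IsTransitiveFn (fun x : ι × κ → α => f fun i => g fun j => x (i, j)) := by
  rintro ⟨i₁, j₁⟩ ⟨i₂, j₂⟩
  obtain ⟨τ, rfl, hτ⟩ := hf i₁ i₂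
  obtain ⟨π, rfl, hπ⟩ := hg j₁ j₂
  refine ⟨τ.prodCongr π, rfl, fun x => ?_⟩
  calc f (fun i => g fun j => x (τ i, π j))
      = f (fun i => g fun j => x (τ i, j)) :=
        congrArg f (funext fun i => hπ fun j => x (τ i, j))
    _ = f (fun i => g fun j => x (i, j)) := hτ fun i => g fun j => x (i, j)

/-- If `f : V^n → W` is transitive in its `n` coordinates and `g : {−1,1}^m → V` is
transitive in its `m` Boolean coordinates, then the block composition
`F(X_1,…,X_n) = f(g(X_1),…,g(X_n))` is transitive in its `nm` Boolean coordinates. -/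
theorem stmt_8 {V W : Type*} (n m : ℕ)
    (f : (Fin n → V) → W) (g : (Fin m → Bool) → V)
    (hf : IsTransitiveFn f) (hg : IsTransitiveFn g) :
    IsTransitiveFn (fun x : Fin n × Fin m → Bool =>
      f (fun i => g (fun j => x (i, j)))) :=
  hf.blockComp hg
end

section
/- The function f : ({−1,1}^n × {−1,1}^n)^n → {−1,1} (the PARITY of n decoded inner-product values of Hadamard-encoded blocks, with value −1 on inputs where some block is not a signed Hadamard codeword) is transitive as a function of its 2n² Boolean input coordinates. -/
/-- The inner product function `IP_m(s,t) = (−1)^{#{i : s_i = t_i = −1}}`. -/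
def IP {m : ℕ} (s t : Fin m → Bool) : ℝ := ∏ i, pm (s i && t i)

/-- The Hadamard codeword of `s ∈ {−1,1}^m`: the string in `{−1,1}^{2^m}`, indexed by
`t ∈ {−1,1}^m`, whose `t`-entry is `∏_{i : s_i = −1} t_i`. -/
def Had {m : ℕ} (s : Fin m → Bool) (t : Fin m → Bool) : ℝ :=
  ∏ i, if s i then pm (t i) else 1

/-- `x ∈ {H(s), −H(s)}` for the string `x ∈ {−1,1}^{2^m}` (indexed by `{−1,1}^m`). -/
def IsHadCodeword {m : ℕ} (x : (Fin m → Bool) → Bool) (s : Fin m → Bool) : Prop :=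
  (∀ t, pm (x t) = Had s t) ∨ (∀ t, pm (x t) = -Had s t)

/-! The value of `f` depends only on the multiset of block values `h̃(X_i, Y_i)`. Moreover `h̃` is
invariant under exchanging `X` and `Y`, since `IP_m` is symmetric, and under reindexing both `X`
and `Y` by `t ↦ t ⊕ a`, since `H(s)_{t ⊕ a} = H(s)_t H(s)_a` maps `±H(s)` to `±H(s)`; these
symmetries move any coordinate of a block to any other. A permutation of the blocks combined with
one such symmetry applied inside every block therefore preserves `f`, and these permutations
move any input coordinate of `f` to any other. -/

section InvariantPerms

variable {ι α β : Type*}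

def invariantPerms (F : (ι → α) → β) : Subgroup (Equiv.Perm ι) where
  carrier := {σ | ∀ x, F (fun a => x (σ a)) = F x}
  one_mem' _ := rfl
  mul_mem' {σ τ} hσ hτ x := (hτ fun a => x (σ a)).trans (hσ x)
  inv_mem' {σ} hσ x := by simpa using (hσ fun a => x (σ⁻¹ a)).symm

@[simp]
lemma mem_invariantPerms {F : (ι → α) → β} {σ : Equiv.Perm ι} :
    σ ∈ invariantPerms F ↔ ∀ x, F (fun a => x (σ a)) = F x :=
  Iff.rfl

lemma isTransitiveFn_of_forall_exists_apply_eq {F : (ι → α) → β} (i₀ : ι)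
    (h : ∀ i, ∃ σ ∈ invariantPerms F, σ i = i₀) : IsTransitiveFn F := by
  intro i j
  obtain ⟨σ, hσ, hσi⟩ := h i
  obtain ⟨τ, hτ, hτj⟩ := h j
  refine ⟨τ⁻¹ * σ, ?_, mem_invariantPerms.mp (mul_mem (inv_mem hτ) hσ)⟩
  simp [hσi, ← hτj]

end InvariantPerms

lemma eq_of_apply_eq_comp_perm {γ κ : Type*} [Fintype κ] {v : γ → κ → ℝ} {F : γ → ℝ}
    (hF1 : ∀ z, (∀ i, v z i ≠ 0) → F z = ∏ i, v z i)
    (hF2 : ∀ z, (∃ i, v z i = 0) → F z = -1)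
    {z z' : γ} (π : Equiv.Perm κ) (hπ : ∀ i, v z' i = v z (π i)) : F z' = F z := by
  by_cases hz : ∃ i, v z i = 0
  · obtain ⟨i, hi⟩ := hz
    rw [hF2 z ⟨i, hi⟩, hF2 z' ⟨π.symm i, by rw [hπ, π.apply_symm_apply, hi]⟩]
  · push Not at hz
    rw [hF1 z hz, hF1 z' fun i => hπ i ▸ hz (π i), Finset.prod_congr rfl fun i _ => hπ i]
    exact Equiv.prod_comp π (v z)

lemma isTransitiveFn_of_blockwise {κ ι α β γ : Type*} [DecidableEq κ] {Φ : (ι → α) → β}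
    (hΦ : IsTransitiveFn Φ) {F : (κ × ι → α) → γ}
    (hF : ∀ z z' (π : Equiv.Perm κ),
      (∀ i, Φ (fun p => z' (i, p)) = Φ (fun p => z (π i, p))) → F z' = F z) :
    IsTransitiveFn F := by
  rintro ⟨i, u⟩ ⟨j, v⟩
  obtain ⟨τ, hτ, hτΦ⟩ := hΦ u v
  refine ⟨(Equiv.swap i j).prodCongr τ, by simp [hτ], fun z => ?_⟩
  exact hF z _ (Equiv.swap i j) fun k => hτΦ fun p => z (Equiv.swap i j k, p)

lemma pm_xor (p q : Bool) : pm (xor p q) = pm p * pm q := by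
  cases p <;> cases q <;> simp [pm]

lemma IP_comm {m : ℕ} (s t : Fin m → Bool) : IP s t = IP t s := by
  simp [IP, Bool.and_comm]

def xorPerm {m : ℕ} (a : Fin m → Bool) : Equiv.Perm (Fin m → Bool) :=
  Function.Involutive.toPerm (fun t k => xor (t k) (a k)) fun t => funext fun k => by simp

@[simp]
lemma xorPerm_apply {m : ℕ} (a t : Fin m → Bool) : xorPerm a t = fun k => xor (t k) (a k) :=
  rfl

lemma Had_xorPerm {m : ℕ} (s t a : Fin m → Bool) : Had s (xorPerm a t) = Had s t * Had s a := by
  simp only [Had, xorPerm_apply, ← Finset.prod_mul_distrib]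
  exact Finset.prod_congr rfl fun i _ => by cases s i <;> simp [pm_xor]

lemma Had_mul_self {m : ℕ} (s a : Fin m → Bool) : Had s a * Had s a = 1 := by
  simp only [Had, ← Finset.prod_mul_distrib]
  exact Finset.prod_eq_one fun i _ => by cases s i <;> cases a i <;> simp [pm]

lemma IsHadCodeword.comp_xorPerm {m : ℕ} {x : (Fin m → Bool) → Bool} {s : Fin m → Bool}
    (hx : IsHadCodeword x s) (a : Fin m → Bool) : IsHadCodeword (fun t => x (xorPerm a t)) s := by
  rcases mul_self_eq_one_iff.mp (Had_mul_self s a) with ha | ha <;> rcases hx with hx | hx <;>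
    simp only [IsHadCodeword, hx, Had_xorPerm, ha] <;> simp

lemma isHadCodeword_comp_xorPerm_iff {m : ℕ} {x : (Fin m → Bool) → Bool} {s a : Fin m → Bool} :
    IsHadCodeword (fun t => x (xorPerm a t)) s ↔ IsHadCodeword x s :=
  ⟨fun hx => by simpa using hx.comp_xorPerm a, fun hx => hx.comp_xorPerm a⟩

def sumUncurry {ι κ α β : Type*} (h : (ι → α) → (κ → α) → β) (w : ι ⊕ κ → α) : β :=
  h (fun s => w (.inl s)) (fun t => w (.inr t))

section PartialHadamardIP

variable {m : ℕ} {h : ((Fin m → Bool) → Bool) → ((Fin m → Bool) → Bool) → ℝ}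

lemma eq_of_isHadCodeword_iff
    (hcode : ∀ x y s t, IsHadCodeword x s → IsHadCodeword y t → h x y = IP s t)
    (hstar : ∀ x y,
      ((¬ ∃ s, IsHadCodeword x s) ∨ (¬ ∃ t, IsHadCodeword y t)) → h x y = 0)
    {x x' y y' : (Fin m → Bool) → Bool} (hx : ∀ s, IsHadCodeword x' s ↔ IsHadCodeword x s)
    (hy : ∀ t, IsHadCodeword y' t ↔ IsHadCodeword y t) : h x' y' = h x y := by
  by_cases hc : (∃ s, IsHadCodeword x s) ∧ ∃ t, IsHadCodeword y t
  · obtain ⟨⟨s, hs⟩, t, ht⟩ := hc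
    rw [hcode x y s t hs ht, hcode x' y' s t ((hx s).2 hs) ((hy t).2 ht)]
  · rw [not_and_or] at hc
    rw [hstar x y hc, hstar x' y' (by simpa only [hx, hy] using hc)]

lemma partialHadamardIP_comm
    (hcode : ∀ x y s t, IsHadCodeword x s → IsHadCodeword y t → h x y = IP s t)
    (hstar : ∀ x y,
      ((¬ ∃ s, IsHadCodeword x s) ∨ (¬ ∃ t, IsHadCodeword y t)) → h x y = 0)
    (x y : (Fin m → Bool) → Bool) : h x y = h y x := by
  by_cases hc : (∃ s, IsHadCodeword x s) ∧ ∃ t, IsHadCodeword y t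
  · obtain ⟨⟨s, hs⟩, t, ht⟩ := hc
    rw [hcode x y s t hs ht, hcode y x t s ht hs, IP_comm]
  · rw [not_and_or] at hc
    rw [hstar x y hc, hstar y x hc.symm]

lemma isTransitiveFn_partialHadamardIP
    (hcode : ∀ x y s t, IsHadCodeword x s → IsHadCodeword y t → h x y = IP s t)
    (hstar : ∀ x y,
      ((¬ ∃ s, IsHadCodeword x s) ∨ (¬ ∃ t, IsHadCodeword y t)) → h x y = 0) :
    IsTransitiveFn (sumUncurry h) := by
  have hswap : Equiv.sumComm _ _ ∈ invariantPerms (sumUncurry h) :=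
    fun w => partialHadamardIP_comm hcode hstar _ _
  have hxor (a : Fin m → Bool) :
      Equiv.sumCongr (xorPerm a) (xorPerm a) ∈ invariantPerms (sumUncurry h) :=
    fun w => eq_of_isHadCodeword_iff hcode hstar
      (fun _ => isHadCodeword_comp_xorPerm_iff (x := fun t => w (.inl t)))
      (fun _ => isHadCodeword_comp_xorPerm_iff (x := fun t => w (.inr t)))
  refine isTransitiveFn_of_forall_exists_apply_eq (.inl fun _ => false) ?_
  rintro (t | t)
  · exact ⟨_, hxor t, by simp⟩
  · exact ⟨_, mul_mem hswap (hxor t), by simp⟩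

end PartialHadamardIP

theorem stmt_9_general (m : ℕ)
    (h : ((Fin m → Bool) → Bool) → ((Fin m → Bool) → Bool) → ℝ)
    (hcode : ∀ x y s t, IsHadCodeword x s → IsHadCodeword y t → h x y = IP s t)
    (hstar : ∀ x y,
      ((¬ ∃ s, IsHadCodeword x s) ∨ (¬ ∃ t, IsHadCodeword y t)) → h x y = 0)
    (F : ((Fin (2 ^ m) × ((Fin m → Bool) ⊕ (Fin m → Bool))) → Bool) → ℝ)
    (hF1 : ∀ z, (∀ i : Fin (2 ^ m),
        h (fun t => z (i, Sum.inl t)) (fun t => z (i, Sum.inr t)) ≠ 0) →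
      F z = ∏ i : Fin (2 ^ m),
        h (fun t => z (i, Sum.inl t)) (fun t => z (i, Sum.inr t)))
    (hF2 : ∀ z, (∃ i : Fin (2 ^ m),
        h (fun t => z (i, Sum.inl t)) (fun t => z (i, Sum.inr t)) = 0) →
      F z = -1) :
    IsTransitiveFn F :=
  isTransitiveFn_of_blockwise (isTransitiveFn_partialHadamardIP hcode hstar)
    fun _ _ π hπ => eq_of_apply_eq_comp_perm
      (v := fun z i => sumUncurry h fun p => z (i, p)) hF1 hF2 π hπ

/-- Let `n = 2^m`, let `h̃` be the partial inner-product-of-Hadamard-codewords function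
(value `IP_m(s,t)` when the two halves are signed Hadamard codewords `±H(s), ±H(t)`,
and `0` otherwise), and let `f` on input `(X_1,Y_1,…,X_n,Y_n)` equal
`∏_{i=1}^n h̃(X_i,Y_i)` when all `h̃(X_i,Y_i) ≠ 0`, and `−1` otherwise (i.e. `f` is the
PARITY of the `n` decoded inner-product values). Then `f` is transitive as a function
of its `2n²` Boolean input coordinates. -/
theorem stmt_9 (m : ℕ) (hm : 1 ≤ m)
    (h : ((Fin m → Bool) → Bool) → ((Fin m → Bool) → Bool) → ℝ)
    (hcode : ∀ x y s t, IsHadCodeword x s → IsHadCodeword y t → h x y = IP s t)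
    (hstar : ∀ x y,
      ((¬ ∃ s, IsHadCodeword x s) ∨ (¬ ∃ t, IsHadCodeword y t)) → h x y = 0)
    (F : ((Fin (2 ^ m) × ((Fin m → Bool) ⊕ (Fin m → Bool))) → Bool) → ℝ)
    (hF1 : ∀ z, (∀ i : Fin (2 ^ m),
        h (fun t => z (i, Sum.inl t)) (fun t => z (i, Sum.inr t)) ≠ 0) →
      F z = ∏ i : Fin (2 ^ m),
        h (fun t => z (i, Sum.inl t)) (fun t => z (i, Sum.inr t)))
    (hF2 : ∀ z, (∃ i : Fin (2 ^ m),
        h (fun t => z (i, Sum.inl t)) (fun t => z (i, Sum.inr t)) = 0) →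
      F z = -1) :
    IsTransitiveFn F :=
  stmt_9_general m h hcode hstar F hF1 hF2
end

section
/- Let A, B be finite sets, G : A × B → {−1,1}, and let μ : A × B → [0,∞) be a probability distribution that is balanced with respect to G, i.e., ∑_{(a,b)} G(a,b)·μ(a,b) = 0. Let ν : {−1,1}^n → [0,∞) be a probability distribution. For X ∈ A^n, Y ∈ B^n write G^n(X,Y) = (G(X_1,Y_1),…,G(X_n,Y_n)) ∈ {−1,1}^n and define λ(X,Y) = 2^n · ν(G^n(X,Y)) · ∏_{i=1}^n μ(X_i,Y_i). Then for every z ∈ {−1,1}^n, ∑_{(X,Y) : G^n(X,Y) = z} λ(X,Y) = ν(z); consequently λ is a probability distribution on A^n × B^n, and for all functions r, h : {−1,1}^n → ℝ one has ∑_{X,Y} r(G^n(X,Y))·h(G^n(X,Y))·λ(X,Y) = ∑_{z} r(z)·h(z)·ν(z). -/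
/-!
Balancedness says exactly that `G` takes each of its two values with `μ`-probability `1/2`.
Hence under the product distribution `μ^n` the pattern `G^n(X,Y)` is uniform on `{−1,1}^n`,
each pattern carrying mass `2^{-n}`, so the reweighting by `2^n · ν(G^n(X,Y))` pushes `λ`
forward to `ν`; the remaining claims are statements about this pushforward.
-/

open Finset

lemma ite_eq_pm_mul (g c : Bool) (x : ℝ) :
    (if g = c then x else 0) = (1 + pm c * pm g) / 2 * x := by
  cases g <;> cases c <;> norm_num [pm]

lemma sum_sum_comp_mul_eq_of_fiber_sum {α β γ : Type*} [Fintype α] [Fintype β] [Fintype γ]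
    [DecidableEq γ] (g : α → β → γ) (w : α → β → ℝ) (ν : γ → ℝ)
    (hfiber : ∀ z, ∑ x, ∑ y, (if g x y = z then w x y else 0) = ν z) (F : γ → ℝ) :
    ∑ x, ∑ y, F (g x y) * w x y = ∑ z, F z * ν z := by
  have expand : ∀ x y, F (g x y) * w x y = ∑ z, F z * if g x y = z then w x y else 0 := by
    intro x y
    simp [mul_ite]
  simp_rw [expand, ← hfiber, mul_sum]
  exact (sum_congr rfl fun x _ => sum_comm).trans sum_comm

section Balanced

variable {A B : Type*} [Fintype A] [Fintype B] (G : A → B → Bool) (μ : A → B → ℝ)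

lemma sum_ite_eq_half_of_balanced (hμ1 : ∑ a, ∑ b, μ a b = 1)
    (hbal : ∑ a, ∑ b, pm (G a b) * μ a b = 0) (c : Bool) :
    ∑ a, ∑ b, (if G a b = c then μ a b else 0) = 1 / 2 := by
  calc ∑ a, ∑ b, (if G a b = c then μ a b else 0)
      = (∑ a, ∑ b, μ a b + pm c * ∑ a, ∑ b, pm (G a b) * μ a b) / 2 := by
        simp only [ite_eq_pm_mul, mul_sum, ← sum_add_distrib, sum_div]
        congr! 2
        ring
    _ = 1 / 2 := by rw [hμ1, hbal, mul_zero, add_zero]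

lemma sum_ite_prod_eq_half_pow {ι : Type*} [Fintype ι] [DecidableEq ι]
    (hμ1 : ∑ a, ∑ b, μ a b = 1) (hbal : ∑ a, ∑ b, pm (G a b) * μ a b = 0) (z : ι → Bool) :
    ∑ X : ι → A, ∑ Y : ι → B,
      (if (fun i => G (X i) (Y i)) = z then ∏ i, μ (X i) (Y i) else 0)
      = (1 / 2) ^ Fintype.card ι := by
  have factor : ∀ (X : ι → A) (Y : ι → B),
      (if (fun i => G (X i) (Y i)) = z then ∏ i, μ (X i) (Y i) else 0)
        = ∏ i, if G (X i) (Y i) = z i then μ (X i) (Y i) else 0 := by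
    intro X Y
    rw [Fintype.prod_ite_zero]
    exact if_congr funext_iff rfl rfl
  calc _ = ∑ X : ι → A, ∑ Y : ι → B,
          ∏ i, if G (X i) (Y i) = z i then μ (X i) (Y i) else 0 := by
        simp_rw [factor]
    _ = ∏ i, ∑ a, ∑ b, if G a b = z i then μ a b else 0 := by
        simp_rw [Fintype.prod_sum]
    _ = (1 / 2) ^ Fintype.card ι := by
        simp_rw [sum_ite_eq_half_of_balanced G μ hμ1 hbal, prod_const, card_univ]

end Balanced

/-- Lifting a balanced distribution `μ` on `A × B` by a distribution `ν` on `{−1,1}^n`: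
with `λ(X,Y) = 2^n · ν(G^n(X,Y)) · ∏_i μ(X_i,Y_i)`, for every `z ∈ {−1,1}^n` the total
`λ`-mass of `{(X,Y) : G^n(X,Y) = z}` equals `ν(z)`; consequently `λ` is a probability
distribution, and `∑_{X,Y} r(G^n(X,Y))·h(G^n(X,Y))·λ(X,Y) = ∑_z r(z)·h(z)·ν(z)` for
all `r, h : {−1,1}^n → ℝ`. Here `G : A × B → {−1,1}` is encoded with Booleans
(`true ↦ −1`) and `G^n(X,Y) = (G(X_1,Y_1),…,G(X_n,Y_n))`. -/
theorem stmt_11 {A B : Type*} [Fintype A] [Fintype B]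
    (G : A → B → Bool) (μ : A → B → ℝ)
    (hμ0 : ∀ a b, 0 ≤ μ a b) (hμ1 : ∑ a : A, ∑ b : B, μ a b = 1)
    (hbal : ∑ a : A, ∑ b : B, pm (G a b) * μ a b = 0)
    (n : ℕ) (ν : (Fin n → Bool) → ℝ)
    (hν0 : ∀ z, 0 ≤ ν z) (hν1 : ∑ z : Fin n → Bool, ν z = 1)
    (lam : (Fin n → A) → (Fin n → B) → ℝ)
    (hlam : ∀ X Y, lam X Y
      = 2 ^ n * ν (fun i => G (X i) (Y i)) * ∏ i, μ (X i) (Y i)) :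
    (∀ z : Fin n → Bool,
      ∑ X : Fin n → A, ∑ Y : Fin n → B,
        (if (fun i => G (X i) (Y i)) = z then lam X Y else 0) = ν z) ∧
    ((∀ X Y, 0 ≤ lam X Y) ∧ ∑ X : Fin n → A, ∑ Y : Fin n → B, lam X Y = 1) ∧
    (∀ r h : (Fin n → Bool) → ℝ,
      ∑ X : Fin n → A, ∑ Y : Fin n → B,
        r (fun i => G (X i) (Y i)) * h (fun i => G (X i) (Y i)) * lam X Y
      = ∑ z : Fin n → Bool, r z * h z * ν z) := by
  have hfiber : ∀ z : Fin n → Bool, ∑ X : Fin n → A, ∑ Y : Fin n → B,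
      (if (fun i => G (X i) (Y i)) = z then lam X Y else 0) = ν z := by
    intro z
    have scale : ∀ X Y, (if (fun i => G (X i) (Y i)) = z then lam X Y else 0)
        = 2 ^ n * ν z * if (fun i => G (X i) (Y i)) = z then ∏ i, μ (X i) (Y i) else 0 := by
      intro X Y
      split_ifs with hz <;> simp [hlam, hz]
    simp_rw [scale, ← mul_sum, sum_ite_prod_eq_half_pow G μ hμ1 hbal z, Fintype.card_fin]
    rw [mul_right_comm, ← mul_pow]
    norm_num
  have hpush := sum_sum_comp_mul_eq_of_fiber_sum _ lam ν hfiber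
  refine ⟨hfiber, ⟨fun X Y => ?_, ?_⟩, fun r h => hpush (r * h)⟩
  · rw [hlam]
    exact mul_nonneg (mul_nonneg (by positivity) (hν0 _)) (prod_nonneg fun i _ => hμ0 _ _)
  · simpa [hν1] using hpush 1
end

section
/- Let A, B be finite sets, G : A × B → {−1,1}, and μ : A × B → [0,∞) a probability distribution. Then for every n ≥ 1, every nonempty subset S ⊆ [n], and all subsets A' ⊆ A^n, B' ⊆ B^n: |∑_{X ∈ A', Y ∈ B'} ∏_{i∈S} G(X_i,Y_i) · ∏_{i=1}^n μ(X_i,Y_i)| ≤ disc_{μ,|S|}(G). -/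
/-- `disc_{μ,k}(G)`: the discrepancy of the `k`-fold XOR-composition of `G` under the
product distribution `μ^{⊗k}`, i.e. the maximum over rectangles `A' × B'` of
`|∑_{X ∈ A', Y ∈ B'} ∏_{i=1}^k G(X_i,Y_i)·μ(X_i,Y_i)|`. -/
noncomputable def discXor {A B : Type*} [Fintype A] [Fintype B]
    (G : A → B → Bool) (μ : A → B → ℝ) (k : ℕ) : ℝ :=
  ⨆ A' : Finset (Fin k → A), ⨆ B' : Finset (Fin k → B),
    |∑ X ∈ A', ∑ Y ∈ B', ∏ i, pm (G (X i) (Y i)) * μ (X i) (Y i)|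

/-!
Split every `X : Fin n → A` into its restrictions `u` to `S` and `z` to `Sᶜ`, and likewise
`Y` into `v` and `w`. The summand factors as the `|S|`-fold XOR term in `(u, v)` times the
weight `∏_{i ∉ S} μ(z_i, w_i)`. For fixed `(z, w)` the pairs `(u, v)` coming from `A' × B'`
form a rectangle, so the inner sum is bounded by `disc_{μ,|S|}(G)`; since the weights are
nonnegative and sum to `(∑ μ)^|Sᶜ| = 1`, the whole sum is a convex combination of such
terms.
-/

open Finset

section Discrepancy

variable {A B : Type*} [Fintype A] [Fintype B] (G : A → B → Bool) (μ : A → B → ℝ)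

theorem abs_sum_sum_le_discXor {k : ℕ} (C : Finset (Fin k → A)) (D : Finset (Fin k → B)) :
    |∑ X ∈ C, ∑ Y ∈ D, ∏ i, pm (G (X i) (Y i)) * μ (X i) (Y i)| ≤ discXor G μ k := by
  unfold discXor
  let disc (C : Finset (Fin k → A)) (D : Finset (Fin k → B)) :=
    |∑ X ∈ C, ∑ Y ∈ D, ∏ i, pm (G (X i) (Y i)) * μ (X i) (Y i)|
  exact (le_ciSup (f := disc C) (Set.finite_range _).bddAbove D).trans <|
    le_ciSup (f := fun C => ⨆ D, disc C D) (Set.finite_range _).bddAbove C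

theorem abs_sum_sum_le_discXor_card {κ : Type*} [Fintype κ]
    (C : Finset (κ → A)) (D : Finset (κ → B)) :
    |∑ X ∈ C, ∑ Y ∈ D, ∏ j, pm (G (X j) (Y j)) * μ (X j) (Y j)|
      ≤ discXor G μ (Fintype.card κ) := by
  let e := Fintype.equivFin κ
  convert abs_sum_sum_le_discXor G μ (C.map (e.arrowCongr (.refl A)).toEmbedding)
    (D.map (e.arrowCongr (.refl B)).toEmbedding) using 2
  simp only [sum_map]
  refine sum_congr rfl fun X _ => sum_congr rfl fun Y _ => ?_
  exact (e.symm.prod_comp fun j => pm (G (X j) (Y j)) * μ (X j) (Y j)).symm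

end Discrepancy

theorem sum_sum_prod_eq_pow {κ A B : Type*} [Fintype κ] [DecidableEq κ] [Fintype A] [Fintype B]
    (μ : A → B → ℝ) :
    ∑ X : κ → A, ∑ Y : κ → B, ∏ j, μ (X j) (Y j) = (∑ a, ∑ b, μ a b) ^ Fintype.card κ := by
  rw [← card_univ, ← prod_const, Fintype.prod_sum]
  refine sum_congr rfl fun X _ => ?_
  exact (Fintype.prod_sum fun j b => μ (X j) b).symm

section Slices

variable {ι : Type*} (p : ι → Prop) [DecidablePred p]

namespace Equiv

theorem piEquivPiSubtypeProd_symm_apply_of_pos {A : Type*} (u : {i // p i} → A)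
    (z : {i // ¬p i} → A) (j : {i // p i}) :
    (piEquivPiSubtypeProd p fun _ => A).symm (u, z) j = u j :=
  congrFun (congrArg Prod.fst ((piEquivPiSubtypeProd p fun _ => A).apply_symm_apply _)) j

theorem piEquivPiSubtypeProd_symm_apply_of_neg {A : Type*} (u : {i // p i} → A)
    (z : {i // ¬p i} → A) (j : {i // ¬p i}) :
    (piEquivPiSubtypeProd p fun _ => A).symm (u, z) j = z j :=
  congrFun (congrArg Prod.snd ((piEquivPiSubtypeProd p fun _ => A).apply_symm_apply _)) j

end Equiv

theorem sum_eq_sum_sum_piEquivPiSubtypeProd_symm [Fintype ι] [DecidableEq ι] {A M : Type*}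
    [Fintype A] [DecidableEq A] [AddCommMonoid M] (s : Finset (ι → A)) (f : (ι → A) → M) :
    ∑ X ∈ s, f X = ∑ z, ∑ u with (Equiv.piEquivPiSubtypeProd p fun _ => A).symm (u, z) ∈ s,
      f ((Equiv.piEquivPiSubtypeProd p fun _ => A).symm (u, z)) := by
  set e := Equiv.piEquivPiSubtypeProd p fun _ => A
  calc ∑ X ∈ s, f X = ∑ X, if X ∈ s then f X else 0 := by rw [sum_ite_mem, univ_inter]
    _ = ∑ q, if e.symm q ∈ s then f (e.symm q) else 0 := (e.symm.sum_comp _).symm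
    _ = _ := by simp only [Fintype.sum_prod_type_right, sum_filter]

theorem sum_sum_eq_sum_sum_sum_sum_piEquivPiSubtypeProd_symm [Fintype ι] [DecidableEq ι]
    {A B M : Type*} [Fintype A] [DecidableEq A] [Fintype B] [DecidableEq B] [AddCommMonoid M]
    (s : Finset (ι → A)) (t : Finset (ι → B)) (F : (ι → A) → (ι → B) → M) :
    ∑ X ∈ s, ∑ Y ∈ t, F X Y =
      ∑ z, ∑ w, ∑ u with (Equiv.piEquivPiSubtypeProd p fun _ => A).symm (u, z) ∈ s,
        ∑ v with (Equiv.piEquivPiSubtypeProd p fun _ => B).symm (v, w) ∈ t,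
          F ((Equiv.piEquivPiSubtypeProd p fun _ => A).symm (u, z))
            ((Equiv.piEquivPiSubtypeProd p fun _ => B).symm (v, w)) := by
  rw [sum_eq_sum_sum_piEquivPiSubtypeProd_symm p s]
  simp only [sum_eq_sum_sum_piEquivPiSubtypeProd_symm p t]
  exact sum_congr rfl fun z _ => sum_comm

end Slices

theorem abs_sum_sum_mul_le_of_abs_le {α β : Type*} [Fintype α] [Fintype β]
    {T W : α → β → ℝ} {M : ℝ}
    (hT : ∀ a b, |T a b| ≤ M) (hW : ∀ a b, 0 ≤ W a b) (hW1 : ∑ a, ∑ b, W a b = 1) :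
    |∑ a, ∑ b, T a b * W a b| ≤ M :=
  calc |∑ a, ∑ b, T a b * W a b| ≤ ∑ a, ∑ b, |T a b| * W a b :=
        (abs_sum_le_sum_abs _ _).trans <| sum_le_sum fun a _ =>
          (abs_sum_le_sum_abs _ _).trans_eq <| sum_congr rfl fun b _ => by
            rw [abs_mul, abs_of_nonneg (hW a b)]
    _ ≤ ∑ a, ∑ b, M * W a b :=
        sum_le_sum fun a _ => sum_le_sum fun b _ => mul_le_mul_of_nonneg_right (hT a b) (hW a b)
    _ = M := by simp only [← mul_sum, hW1, mul_one]

theorem prod_mul_prod_eq_prod_mul_mul_prod_compl {ι M : Type*} [Fintype ι] [DecidableEq ι]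
    [CommMonoid M] (S : Finset ι) (f g : ι → M) :
    (∏ i ∈ S, f i) * ∏ i, g i = (∏ j : S, f j * g j) * ∏ j : {i // i ∉ S}, g j := by
  rw [← prod_mul_prod_compl S g, ← mul_assoc, ← prod_mul_distrib, ← prod_coe_sort S,
    prod_subtype Sᶜ (p := (· ∉ S)) fun _ => mem_compl]

theorem stmt_12_general {A B : Type*} [Fintype A] [Fintype B]
    (G : A → B → Bool) (μ : A → B → ℝ)
    (hμ0 : ∀ a b, 0 ≤ μ a b) (hμ1 : ∑ a : A, ∑ b : B, μ a b = 1)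
    (n : ℕ) (S : Finset (Fin n))
    (A' : Finset (Fin n → A)) (B' : Finset (Fin n → B)) :
    |∑ X ∈ A', ∑ Y ∈ B',
        (∏ i ∈ S, pm (G (X i) (Y i))) * ∏ i, μ (X i) (Y i)|
      ≤ discXor G μ S.card := by
  classical
  rw [sum_sum_eq_sum_sum_sum_sum_piEquivPiSubtypeProd_symm (· ∈ S)]
  simp only [prod_mul_prod_eq_prod_mul_mul_prod_compl,
    Equiv.piEquivPiSubtypeProd_symm_apply_of_pos, Equiv.piEquivPiSubtypeProd_symm_apply_of_neg,
    ← sum_mul]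
  refine (abs_sum_sum_mul_le_of_abs_le (fun _ _ => abs_sum_sum_le_discXor_card G μ _ _)
    (fun _ _ => prod_nonneg fun _ _ => hμ0 _ _) ?_).trans_eq (by rw [Fintype.card_coe])
  rw [sum_sum_prod_eq_pow, hμ1, one_pow]

/-- For every probability distribution `μ` on `A × B`, every `n ≥ 1`, every nonempty
`S ⊆ [n]` and all subsets `A' ⊆ A^n`, `B' ⊆ B^n`:
`|∑_{X ∈ A', Y ∈ B'} ∏_{i∈S} G(X_i,Y_i) · ∏_{i=1}^n μ(X_i,Y_i)| ≤ disc_{μ,|S|}(G)`. -/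
theorem stmt_12 {A B : Type*} [Fintype A] [Fintype B]
    (G : A → B → Bool) (μ : A → B → ℝ)
    (hμ0 : ∀ a b, 0 ≤ μ a b) (hμ1 : ∑ a : A, ∑ b : B, μ a b = 1)
    (n : ℕ) (hn : 1 ≤ n) (S : Finset (Fin n)) (hS : S.Nonempty)
    (A' : Finset (Fin n → A)) (B' : Finset (Fin n → B)) :
    |∑ X ∈ A', ∑ Y ∈ B',
        (∏ i ∈ S, pm (G (X i) (Y i))) * ∏ i, μ (X i) (Y i)|
      ≤ discXor G μ S.card :=
  stmt_12_general G μ hμ0 hμ1 n S A' B'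
end
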